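/- Let f be a C¹ diffeomorphism with a compact invariant set K satisfying the conclusion of the center-manifold theorem: K is contained in the interior of a compact C¹ submanifold-with-boundary S, tangent to E^c at points of K and locally invariant. Suppose moreover that for ε > 0 small every point of the maximal invariant set Λ of a sufficiently small neighborhood U of K has a strong unstable manifold of size ε intersecting S transversely at a unique point π(x) with d(x, π(x)) < δ for given δ ≪ ε, and that π commutes with f in the sense fⁿ(π(x)) = π(fⁿ(x)) for all n ∈ ℤ. Then x = π(x) for all x ∈ Λ; that is, the maximal invariant set Λ of U is contained in S. -/
import Mathlib


open Set

/-- Corollary `c.principal` (in local coordinates on `ℝᴺ`).  `K` is a compact invariant set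
contained in the locally invariant center submanifold `S`; `Λ` is the maximal invariant set
of the neighbourhood `U` of `K`; every `x ∈ Λ` has a point `π(x) = pr x` on `S` lying on
its local strong unstable manifold of size `ε` (so that backward iterates of `x` and
`pr x` contract at the uniform exponential rate `lam⁻¹`), with `d(x, pr x) < δ`, and `pr`
commutes with the dynamics.  Then `pr x = x` for all `x ∈ Λ`, i.e. `Λ ⊆ S`. -/
theorem stmt_14 (N : ℕ)
    (f g : EuclideanSpace ℝ (Fin N) → EuclideanSpace ℝ (Fin N))
    (hinv : ∀ x, g (f x) = x ∧ f (g x) = x)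
    (K S U Λ : Set (EuclideanSpace ℝ (Fin N)))
    (pr : EuclideanSpace ℝ (Fin N) → EuclideanSpace ℝ (Fin N))
    (δ ε lam : ℝ) (hδ : 0 < δ) (hδε : δ < ε) (hlam : 1 < lam)
    (hK : IsCompact K) (hKinv : f '' K = K) (hKS : K ⊆ S)
    (hU : IsOpen U) (hKU : K ⊆ U)
    -- `Λ` is the maximal invariant set of `U`
    (hΛ : Λ = {x | ∀ n : ℕ, f^[n] x ∈ U ∧ g^[n] x ∈ U})
    -- `pr x` is the intersection of the `ε`-strong unstable leaf of `x` with `S`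
    (hprS : ∀ x ∈ Λ, pr x ∈ S)
    (hprδ : ∀ x ∈ Λ, dist x (pr x) < δ)
    -- `pr x ∈ W^{uu}_ε(x)`: uniform exponential contraction of backward iterates
    (hcontr : ∀ x ∈ Λ, ∀ n : ℕ,
      dist (g^[n] x) (g^[n] (pr x)) ≤ (lam⁻¹) ^ n * dist x (pr x))
    -- `π` commutes with `f` (hence with all iterates `fⁿ`, `n ∈ ℤ`)
    (hcomm : ∀ x ∈ Λ, pr (f x) = f (pr x) ∧ pr (g x) = g (pr x)) :
    (∀ x ∈ Λ, pr x = x) ∧ Λ ⊆ S := by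
  -- g^[n] (f^[n] x) = x
  have hgf : ∀ n x, g^[n] (f^[n] x) = x := by
    intro n
    induction n with
    | zero => intro x; simp
    | succ n ih =>
      intro x
      rw [Function.iterate_succ_apply, Function.iterate_succ_apply', (hinv _).1, ih]
  -- Λ is forward invariant
  have hΛf : ∀ x ∈ Λ, f x ∈ Λ := by
    intro x hx
    rw [hΛ] at hx ⊢
    intro n
    refine ⟨?_, ?_⟩
    · have := (hx (n + 1)).1
      rwa [Function.iterate_succ_apply] at this
    · cases n with
      | zero => simpa using (hx 1).1
      | succ m =>
        have := (hx m).2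
        rwa [Function.iterate_succ_apply, (hinv x).1]
  have hΛfn : ∀ x ∈ Λ, ∀ n : ℕ, f^[n] x ∈ Λ := by
    intro x hx n
    induction n with
    | zero => simpa using hx
    | succ m ih => rw [Function.iterate_succ_apply']; exact hΛf _ ih
  -- pr commutes with f^[n]
  have hcommn : ∀ x ∈ Λ, ∀ n : ℕ, pr (f^[n] x) = f^[n] (pr x) := by
    intro x hx n
    induction n with
    | zero => simp
    | succ m ih =>
      rw [Function.iterate_succ_apply', (hcomm _ (hΛfn x hx m)).1, ih]
      exact (Function.iterate_succ_apply' f m (pr x)).symm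
  have key : ∀ x ∈ Λ, pr x = x := by
    intro x hx
    have hd : ∀ n : ℕ, dist x (pr x) ≤ (lam⁻¹) ^ n * δ := by
      intro n
      have h1 := hcontr _ (hΛfn x hx n) n
      rw [hcommn x hx n, hgf n x, hgf n (pr x)] at h1
      calc dist x (pr x) ≤ (lam⁻¹) ^ n * dist (f^[n] x) (f^[n] (pr x)) := h1
        _ ≤ (lam⁻¹) ^ n * δ := by
            rw [← hcommn x hx n]
            apply mul_le_mul_of_nonneg_left (le_of_lt (hprδ _ (hΛfn x hx n)))
            positivity
    have hlim : Filter.Tendsto (fun n : ℕ => (lam⁻¹) ^ n * δ) Filter.atTop (nhds 0) := by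
      have h0 : Filter.Tendsto (fun n : ℕ => (lam⁻¹) ^ n) Filter.atTop (nhds 0) :=
        tendsto_pow_atTop_nhds_zero_of_lt_one (by positivity)
          (by rw [inv_lt_one_iff₀]; right; exact hlam)
      simpa using h0.mul_const δ
    have : dist x (pr x) ≤ 0 :=
      ge_of_tendsto' hlim hd
    have : dist x (pr x) = 0 := le_antisymm this dist_nonneg
    exact (dist_eq_zero.mp this).symm
  exact ⟨key, fun x hx => key x hx ▸ hprS x hx⟩
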